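/- Let F : R^D → R be continuously differentiable with L-Lipschitz gradient and μ-strongly convex with minimizer w*. Suppose w^{t+1} = w^t - (1/L)(∇F(w^t) - e^t) where the error satisfies E‖e^t‖² ≤ 2β₁ d + 4μβ₂ d (E F(w^t) - F(w*)) for nonnegative constants β₁, β₂, d. Then E[F(w^{t+1}) - F(w*)] ≤ (1 - μ/L) E[F(w^t) - F(w*)] + ((2μβ₂/L) E[F(w^t) - F(w*)] + β₁/L) · 2d. -/

import Mathlib

open MeasureTheory
open scoped RealInnerProductSpace

/-!
The descent lemma for the inexact step `x - (1/L)(∇F x - e)` gives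
`F x' ≤ F x - (‖∇F x‖² - ‖e‖²) / (2L)`, and strong convexity yields the Polyak–Łojasiewicz
inequality `2μ (F x - F y) ≤ ‖∇F x‖²`. Together they give, pointwise,
`F x' - F y ≤ (1 - μ/L)(F x - F y) + ‖e‖² / (2L)`; taking expectations and inserting the bound
on `E‖e‖²` finishes the proof.
-/

lemma le_add_add_half_of_hasDerivAt_le {φ φ' : ℝ → ℝ} {a b : ℝ}
    (hφ : ∀ t, HasDerivAt φ (φ' t) t) (hle : ∀ t ∈ Set.Ioo (0 : ℝ) 1, φ' t ≤ a + b * t) :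
    φ 1 ≤ φ 0 + a + b / 2 := by
  set g : ℝ → ℝ := fun t => φ t - a * t - b / 2 * t ^ 2
  have hg : ∀ t, HasDerivAt g (φ' t - a - b * t) t := fun t => by
    refine (((hφ t).sub ((hasDerivAt_id t).const_mul a)).sub
      ((hasDerivAt_pow 2 t).const_mul (b / 2))).congr_deriv ?_
    norm_num; ring
  have hanti : AntitoneOn g (Set.Icc 0 1) := by
    refine antitoneOn_of_hasDerivWithinAt_nonpos (convex_Icc 0 1)
      (fun t _ => (hg t).continuousAt.continuousWithinAt) (fun t _ => (hg t).hasDerivWithinAt)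
      fun t ht => ?_
    rw [interior_Icc] at ht
    linarith [hle t ht]
  have := hanti (by simp) (by simp) zero_le_one
  simp only [g] at this
  linarith

section InnerProductSpace

variable {E : Type*} [NormedAddCommGroup E] [InnerProductSpace ℝ E]

lemma two_mul_sub_le_norm_sq_of_add_inner_add_le {μ a b : ℝ} {g u : E} (hμ : 0 ≤ μ)
    (h : a + ⟪g, u⟫ + μ / 2 * ‖u‖ ^ 2 ≤ b) : 2 * μ * (a - b) ≤ ‖g‖ ^ 2 := by
  have hsq : ‖g + μ • u‖ ^ 2 = ‖g‖ ^ 2 + 2 * μ * ⟪g, u⟫ + μ ^ 2 * ‖u‖ ^ 2 := by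
    rw [norm_add_sq_real, inner_smul_right, norm_smul, Real.norm_eq_abs, abs_of_nonneg hμ]
    ring
  nlinarith [mul_le_mul_of_nonneg_left h hμ, sq_nonneg ‖g + μ • u‖]

variable [CompleteSpace E] {F : E → ℝ} {L μ : ℝ}

theorem apply_add_le_of_lipschitz_gradient (hF : Differentiable ℝ F)
    (hLip : ∀ x y, ‖gradient F x - gradient F y‖ ≤ L * ‖x - y‖) (x v : E) :
    F (x + v) ≤ F x + ⟪gradient F x, v⟫ + L / 2 * ‖v‖ ^ 2 := by
  have hφ : ∀ t : ℝ, HasDerivAt (fun t : ℝ => F (x + t • v)) ⟪gradient F (x + t • v), v⟫ t := by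
    intro t
    have hline : HasDerivAt (fun t : ℝ => x + t • v) v t := by
      simpa using ((hasDerivAt_id t).smul_const v).const_add x
    simpa [InnerProductSpace.toDual_apply_apply, Function.comp_def] using
      (hF _).hasGradientAt.hasFDerivAt.comp_hasDerivAt t hline
  have hslope : ∀ t ∈ Set.Ioo (0 : ℝ) 1,
      ⟪gradient F (x + t • v), v⟫ ≤ ⟪gradient F x, v⟫ + L * ‖v‖ ^ 2 * t := by
    intro t ht
    have hdist : ‖x + t • v - x‖ = t * ‖v‖ := by
      rw [add_sub_cancel_left, norm_smul, Real.norm_of_nonneg ht.1.le]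
    calc ⟪gradient F (x + t • v), v⟫
        = ⟪gradient F x, v⟫ + ⟪gradient F (x + t • v) - gradient F x, v⟫ := by
          rw [inner_sub_left]; ring
      _ ≤ ⟪gradient F x, v⟫ + L * (t * ‖v‖) * ‖v‖ := by
          gcongr
          exact (real_inner_le_norm _ _).trans
            (mul_le_mul_of_nonneg_right (hdist ▸ hLip _ _) (norm_nonneg v))
      _ = ⟪gradient F x, v⟫ + L * ‖v‖ ^ 2 * t := by ring
  simpa [mul_div_right_comm] using le_add_add_half_of_hasDerivAt_le hφ hslope

theorem apply_inexact_gradient_step_le (hL : 0 < L) (hF : Differentiable ℝ F)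
    (hLip : ∀ x y, ‖gradient F x - gradient F y‖ ≤ L * ‖x - y‖) (x e : E) :
    F (x - (1 / L) • (gradient F x - e)) ≤ F x - (‖gradient F x‖ ^ 2 - ‖e‖ ^ 2) / (2 * L) := by
  set g := gradient F x
  have hdesc := apply_add_le_of_lipschitz_gradient hF hLip x (-((1 / L) • (g - e)))
  rw [← sub_eq_add_neg, inner_neg_right, norm_neg, real_inner_smul_right, norm_smul,
    Real.norm_of_nonneg (by positivity), inner_sub_right, real_inner_self_eq_norm_sq,
    mul_pow, norm_sub_sq_real] at hdesc
  convert hdesc using 1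
  field_simp
  ring

theorem sub_le_of_inexact_gradient_step (hL : 0 < L) (hμ : 0 ≤ μ) (hF : Differentiable ℝ F)
    (hLip : ∀ x y, ‖gradient F x - gradient F y‖ ≤ L * ‖x - y‖) {x y : E}
    (hsc : F y ≥ F x + ⟪gradient F x, y - x⟫ + μ / 2 * ‖y - x‖ ^ 2) (e : E) :
    F (x - (1 / L) • (gradient F x - e)) - F y
      ≤ (1 - μ / L) * (F x - F y) + ‖e‖ ^ 2 / (2 * L) := by
  have hPL := two_mul_sub_le_norm_sq_of_add_inner_add_le hμ hsc
  have hstep := apply_inexact_gradient_step_le hL hF hLip x e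
  have hPL' : μ / L * (F x - F y) ≤ ‖gradient F x‖ ^ 2 / (2 * L) := by
    rw [div_mul_eq_mul_div, div_le_div_iff₀ hL (by positivity)]
    nlinarith
  have : (‖gradient F x‖ ^ 2 - ‖e‖ ^ 2) / (2 * L)
      = ‖gradient F x‖ ^ 2 / (2 * L) - ‖e‖ ^ 2 / (2 * L) := sub_div _ _ _
  linarith

end InnerProductSpace

theorem stmt_6_general (D : ℕ) {Ω : Type*} [MeasurableSpace Ω] (P : Measure Ω)
    [IsProbabilityMeasure P]
    (F : EuclideanSpace ℝ (Fin D) → ℝ) (L μ : ℝ) (hL : 0 < L) (hμ : 0 < μ)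
    (hdiff : ContDiff ℝ 1 F)
    (hLip : ∀ x y, ‖gradient F x - gradient F y‖ ≤ L * ‖x - y‖)
    (hsc : ∀ x y, F y ≥ F x + inner ℝ (gradient F x) (y - x) + (μ / 2) * ‖y - x‖ ^ 2)
    (wstar : EuclideanSpace ℝ (Fin D))
    (β₁ β₂ d : ℝ)
    (w w' e : Ω → EuclideanSpace ℝ (Fin D))
    (hupd : ∀ ω, w' ω = w ω - (1 / L) • (gradient F (w ω) - e ω))
    (hint_w : Integrable (fun ω => F (w ω)) P)
    (hint_w' : Integrable (fun ω => F (w' ω)) P)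
    (hint_e : Integrable (fun ω => ‖e ω‖ ^ 2) P)
    (herr : ∫ ω, ‖e ω‖ ^ 2 ∂P
      ≤ 2 * β₁ * d + 4 * μ * β₂ * d * (∫ ω, (F (w ω) - F wstar) ∂P)) :
    ∫ ω, (F (w' ω) - F wstar) ∂P
      ≤ (1 - μ / L) * (∫ ω, (F (w ω) - F wstar) ∂P)
        + ((2 * μ * β₂ / L) * (∫ ω, (F (w ω) - F wstar) ∂P) + β₁ / L) * (2 * d) := by
  have hstep : ∀ ω, F (w' ω) - F wstar
      ≤ (1 - μ / L) * (F (w ω) - F wstar) + ‖e ω‖ ^ 2 / (2 * L) := fun ω => by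
    rw [hupd ω]
    exact sub_le_of_inexact_gradient_step hL hμ.le (hdiff.differentiable one_ne_zero) hLip
      (hsc _ _) _
  set A := ∫ ω, (F (w ω) - F wstar) ∂P
  set B := 2 * β₁ * d + 4 * μ * β₂ * d * A
  have hgap : Integrable (fun ω => F (w ω) - F wstar) P := hint_w.sub (integrable_const _)
  have hB : 0 ≤ B := (integral_nonneg fun ω => by positivity).trans herr
  calc ∫ ω, (F (w' ω) - F wstar) ∂P
      ≤ ∫ ω, ((1 - μ / L) * (F (w ω) - F wstar) + ‖e ω‖ ^ 2 / (2 * L)) ∂P :=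
        integral_mono (hint_w'.sub (integrable_const _))
          ((hgap.const_mul _).add (hint_e.div_const _)) hstep
    _ = (1 - μ / L) * A + (∫ ω, ‖e ω‖ ^ 2 ∂P) / (2 * L) := by
        rw [integral_add (hgap.const_mul _) (hint_e.div_const _), integral_const_mul,
          integral_div]
    _ ≤ (1 - μ / L) * A + B / L := by
        grw [herr, div_le_div_of_nonneg_left hB hL (by linarith : L ≤ 2 * L)]
    _ = _ := by field_simp; ring

theorem stmt_6 (D : ℕ) {Ω : Type*} [MeasurableSpace Ω] (P : Measure Ω)
    [IsProbabilityMeasure P]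
    (F : EuclideanSpace ℝ (Fin D) → ℝ) (L μ : ℝ) (hL : 0 < L) (hμ : 0 < μ)
    (hdiff : ContDiff ℝ 1 F)
    (hLip : ∀ x y, ‖gradient F x - gradient F y‖ ≤ L * ‖x - y‖)
    (hsc : ∀ x y, F y ≥ F x + inner ℝ (gradient F x) (y - x) + (μ / 2) * ‖y - x‖ ^ 2)
    (wstar : EuclideanSpace ℝ (Fin D)) (hmin : ∀ w, F wstar ≤ F w)
    (β₁ β₂ d : ℝ) (hβ₁ : 0 ≤ β₁) (hβ₂ : 0 ≤ β₂) (hd : 0 ≤ d)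
    (w w' e : Ω → EuclideanSpace ℝ (Fin D))
    (hupd : ∀ ω, w' ω = w ω - (1 / L) • (gradient F (w ω) - e ω))
    (hint_w : Integrable (fun ω => F (w ω)) P)
    (hint_w' : Integrable (fun ω => F (w' ω)) P)
    (hint_e : Integrable (fun ω => ‖e ω‖ ^ 2) P)
    (herr : ∫ ω, ‖e ω‖ ^ 2 ∂P
      ≤ 2 * β₁ * d + 4 * μ * β₂ * d * (∫ ω, (F (w ω) - F wstar) ∂P)) :
    ∫ ω, (F (w' ω) - F wstar) ∂P
      ≤ (1 - μ / L) * (∫ ω, (F (w ω) - F wstar) ∂P)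
        + ((2 * μ * β₂ / L) * (∫ ω, (F (w ω) - F wstar) ∂P) + β₁ / L) * (2 * d) :=
  stmt_6_general D P F L μ hL hμ hdiff hLip hsc wstar β₁ β₂ d w w' e hupd hint_w hint_w' hint_e herr
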